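/- arXiv:math/0406097 — 3 statements merged into one kernel-verified Lean document; each statement's English description precedes it below -/
import Mathlib

section
/- Let R be a commutative ring and let I, J be ideals of R with J I^r = I^{r+1} for some integer r ≥ 1. Assume that J^r : I^r = I^r and that each power I^i with 1 ≤ i ≤ r is Ratliff–Rush closed, i.e., the union over n ≥ 0 of the ideals I^{i+n} : I^n equals I^i. Then J^i : I^r = I^i for every integer i with 1 ≤ i ≤ r. -/
/-!
Iterating the reduction equation gives `J ^ k * I ^ r = I ^ (r + k)`. Hence, for `i + k = r`,
an element `x` with `x I ^ r ⊆ J ^ i` satisfies `x I ^ k I ^ r = x J ^ k I ^ r ⊆ J ^ r`, so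
`x I ^ k ⊆ J ^ r : I ^ r = I ^ r`, i.e. `x ∈ I ^ (i + k) : I ^ k`, which lies in the
Ratliff–Rush closure of `I ^ i`, that is in `I ^ i`. Conversely
`I ^ i I ^ r = J ^ i I ^ r ⊆ J ^ i`.
-/

theorem pow_mul_pow_eq_pow_add_of_mul_pow_eq {M : Type*} [CommMonoid M] {a j : M} {r : ℕ}
    (h : j * a ^ r = a ^ (r + 1)) (k : ℕ) : j ^ k * a ^ r = a ^ (r + k) := by
  induction k with
  | zero => simp
  | succ k ih =>
    calc j ^ (k + 1) * a ^ r = j ^ k * (j * a ^ r) := by rw [pow_succ, mul_assoc]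
      _ = j ^ k * a ^ r * a := by rw [h, pow_succ, mul_assoc]
      _ = a ^ (r + (k + 1)) := by rw [ih, ← pow_succ, add_assoc]

namespace Ideal

variable {R : Type*} [CommSemiring R]

theorem le_colon_iff_mul_le {A B C : Ideal R} : A ≤ B.colon (C : Set R) ↔ A * C ≤ B := by
  rw [mul_le, SetLike.le_def]
  simp only [Submodule.mem_colon, smul_eq_mul, SetLike.mem_coe]

variable {I J : Ideal R} {r : ℕ}

theorem pow_le_colon_pow_of_mul_pow_eq (hred : J * I ^ r = I ^ (r + 1)) (i : ℕ) :
    I ^ i ≤ (J ^ i).colon ↑(I ^ r) := by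
  rw [le_colon_iff_mul_le, ← pow_add, add_comm, ← pow_mul_pow_eq_pow_add_of_mul_pow_eq hred]
  exact mul_le_left

theorem colon_pow_mul_pow_le_of_mul_pow_eq (hred : J * I ^ r = I ^ (r + 1)) (i k : ℕ) :
    (J ^ i).colon ↑(I ^ r) * I ^ k ≤ (J ^ (i + k)).colon ↑(I ^ r) := by
  rw [le_colon_iff_mul_le]
  calc (J ^ i).colon ↑(I ^ r) * I ^ k * I ^ r
      = J ^ k * ((J ^ i).colon ↑(I ^ r) * I ^ r) := by
        rw [mul_assoc, ← pow_add, add_comm, ← pow_mul_pow_eq_pow_add_of_mul_pow_eq hred]; ring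
    _ ≤ J ^ k * J ^ i := mul_mono_right (le_colon_iff_mul_le.mp le_rfl)
    _ = J ^ (i + k) := by rw [← pow_add, add_comm]

end Ideal

open Ideal in
theorem colon_pow_eq_pow_of_ratliffRush_closed_general
    {R : Type*} [CommRing R] (I J : Ideal R) (r : ℕ)
    (hred : J * I ^ r = I ^ (r + 1))
    (hcol : Submodule.colon (J ^ r) ((I ^ r : Ideal R) : Set R) = I ^ r)
    (hRR : ∀ i : ℕ, 1 ≤ i → i ≤ r →
      (⨆ n : ℕ, Submodule.colon (I ^ (i + n)) ((I ^ n : Ideal R) : Set R)) = I ^ i) :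
    ∀ i : ℕ, 1 ≤ i → i ≤ r → Submodule.colon (J ^ i) ((I ^ r : Ideal R) : Set R) = I ^ i := by
  intro i hi hir
  obtain ⟨k, rfl⟩ := Nat.exists_eq_add_of_le hir
  refine le_antisymm ?_ (pow_le_colon_pow_of_mul_pow_eq hred i)
  calc (J ^ i).colon ↑(I ^ (i + k))
      ≤ (I ^ (i + k)).colon ↑(I ^ k) :=
        le_colon_iff_mul_le.mpr ((colon_pow_mul_pow_le_of_mul_pow_eq hred i k).trans hcol.le)
    _ ≤ ⨆ n : ℕ, (I ^ (i + n)).colon ↑(I ^ n) :=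
        le_iSup (fun n ↦ (I ^ (i + n)).colon ↑(I ^ n)) k
    _ = I ^ i := hRR i hi hir

/-- **Corollary 4.61, second assertion**: Let `R` be a commutative ring and `I, J` ideals with
`J I^r = I^(r+1)` for some `r ≥ 1`.  Assume `(J^r : I^r) = I^r` and that each power `I^i` with
`1 ≤ i ≤ r` is Ratliff–Rush closed, i.e. the (increasing) union `⋃_{n ≥ 0} (I^(i+n) : I^n)`
equals `I^i`.  Then `(J^i : I^r) = I^i` for all `1 ≤ i ≤ r` (the colon conditions of
Corollary 4.4(5) characterizing Gorensteinness of the associated graded ring). -/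
theorem colon_pow_eq_pow_of_ratliffRush_closed
    {R : Type*} [CommRing R] (I J : Ideal R) (r : ℕ) (hr : 1 ≤ r)
    (hred : J * I ^ r = I ^ (r + 1))
    (hcol : Submodule.colon (J ^ r) ((I ^ r : Ideal R) : Set R) = I ^ r)
    (hRR : ∀ i : ℕ, 1 ≤ i → i ≤ r →
      (⨆ n : ℕ, Submodule.colon (I ^ (i + n)) ((I ^ n : Ideal R) : Set R)) = I ^ i) :
    ∀ i : ℕ, 1 ≤ i → i ≤ r → Submodule.colon (J ^ i) ((I ^ r : Ideal R) : Set R) = I ^ i :=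
  colon_pow_eq_pow_of_ratliffRush_closed_general I J r hred hcol hRR
end

section
/- Let R be a commutative ring, let x ∈ R be a non-zerodivisor, let J = xR, and let I be an ideal with J ⊆ I. Let r ≥ 1 be an integer with I^{r+1} = JI^r and I^r ≠ JI^{r-1}. If there exists an integer u ≥ 0 such that J^i : I^r = I^{max(i-u,0)} for every integer i ≥ 0, then J^i : I^r = I^i for every integer i ≥ 0 (that is, u can be taken to be 0). -/
/-!
If `u > 0`, then `(J^u : I^r) = I^0 = R`, so `I^r ⊆ J^u ⊆ J` and
`I^r · I^r = I^(2r) = J^r I^r ⊆ J^(r+u)`. Writing `y ∈ I^r` as `y = x z` and cancelling the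
non-zerodivisor `x` gives `z ∈ (J^(r+u-1) : I^r) = I^(r-1)`, hence `I^r ⊆ J I^(r-1)`, against
the minimality of the reduction number `r`. So `u = 0`.
-/

namespace Ideal

variable {R : Type*} [CommRing R]

theorem pow_add_eq_pow_mul_of_pow_succ_eq {I J : Ideal R} {r : ℕ} (h : I ^ (r + 1) = J * I ^ r)
    (k : ℕ) : I ^ (r + k) = J ^ k * I ^ r := by
  induction k with
  | zero => simp
  | succ k ih =>
    calc I ^ (r + (k + 1)) = I ^ (r + k) * I := by rw [← add_assoc, pow_succ]
      _ = J ^ k * I ^ (r + 1) := by rw [ih, mul_assoc, pow_succ]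
      _ = J ^ (k + 1) * I ^ r := by rw [h, ← mul_assoc, pow_succ]

theorem mul_pow_pred_le_pow {I J : Ideal R} (hJI : J ≤ I) : ∀ r : ℕ, J * I ^ (r - 1) ≤ I ^ r
  | 0 => by simp
  | r + 1 => by simpa [pow_succ'] using mul_mono_left hJI

theorem mul_mem_span_singleton_pow_succ_iff {x : R} (hx : x ∈ nonZeroDivisors R) (a : R)
    (n : ℕ) : x * a ∈ span {x} ^ (n + 1) ↔ a ∈ span {x} ^ n := by
  rw [span_singleton_pow, span_singleton_pow, mem_span_singleton, mem_span_singleton, pow_succ',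
    dvd_cancel_left_mem_nonZeroDivisors hx]

theorem mul_mem_colon_span_singleton_pow_succ_iff {x : R} (hx : x ∈ nonZeroDivisors R)
    (N : Ideal R) (z : R) (n : ℕ) :
    x * z ∈ (span {x} ^ (n + 1)).colon (N : Set R) ↔
      z ∈ (span {x} ^ n).colon (N : Set R) := by
  simp only [Submodule.mem_colon, smul_eq_mul, mul_assoc, mul_mem_span_singleton_pow_succ_iff hx]

theorem le_span_singleton_mul_colon {x : R} (hx : x ∈ nonZeroDivisors R) {N : Ideal R} {n : ℕ}
    (hN : N ≤ span {x}) (hNN : N * N ≤ span {x} ^ (n + 1)) :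
    N ≤ span {x} * (span {x} ^ n).colon (N : Set R) := by
  intro y hy
  obtain ⟨z, rfl⟩ := mem_span_singleton'.mp (hN hy)
  refine mem_span_singleton_mul.mpr ⟨z, ?_, mul_comm x z⟩
  rw [← mul_mem_colon_span_singleton_pow_succ_iff hx, mul_comm, Submodule.mem_colon]
  exact fun p hp ↦ hNN (mul_mem_mul hy hp)

end Ideal

theorem colon_pow_eq_pow_of_exists_shift_general
    {R : Type*} [CommRing R] (x : R) (hx : x ∈ nonZeroDivisors R)
    (J : Ideal R) (hJ : J = Ideal.span {x}) (I : Ideal R) (hJI : J ≤ I)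
    (r : ℕ) (hred : I ^ (r + 1) = J * I ^ r) (hmin : I ^ r ≠ J * I ^ (r - 1))
    (u : ℕ) (hu : ∀ i : ℕ, Submodule.colon (J ^ i) ((I ^ r : Ideal R) : Set R) = I ^ (i - u)) :
    ∀ i : ℕ, Submodule.colon (J ^ i) ((I ^ r : Ideal R) : Set R) = I ^ i := by
  obtain rfl | hu_pos := Nat.eq_zero_or_pos u
  · simpa using hu
  subst hJ
  have hIrJu : I ^ r ≤ Ideal.span {x} ^ u := by
    have h := hu u
    rwa [Nat.sub_self, pow_zero, Ideal.one_eq_top, Submodule.colon_eq_top_iff_subset] at h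
  have hsq : I ^ r * I ^ r ≤ Ideal.span {x} ^ (r + u - 1 + 1) := by
    rw [Nat.sub_add_cancel (by omega), ← pow_add,
      Ideal.pow_add_eq_pow_mul_of_pow_succ_eq hred, pow_add]
    exact Ideal.mul_mono_right hIrJu
  have hcolon := hu (r + u - 1)
  rw [show r + u - 1 - u = r - 1 by omega] at hcolon
  have hle :=
    Ideal.le_span_singleton_mul_colon hx (hIrJu.trans (Ideal.pow_le_self hu_pos.ne')) hsq
  rw [hcolon] at hle
  exact (hmin (le_antisymm hle (Ideal.mul_pow_pred_le_pow hJI r))).elim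

/-- **Corollary 4.4, (3) ⟹ (4)**: Let `R` be a commutative ring, `x` a non-zerodivisor,
`J = xR ⊆ I`, and `r ≥ 1` with `I^(r+1) = J I^r` and `I^r ≠ J I^(r-1)`.  If there is `u ≥ 0`
with `(J^i : I^r) = I^(max(i-u,0))` for every `i ≥ 0` (truncated subtraction encodes negative
powers of `I` being `R`), then `(J^i : I^r) = I^i` for every `i ≥ 0`. -/
theorem colon_pow_eq_pow_of_exists_shift
    {R : Type*} [CommRing R] (x : R) (hx : x ∈ nonZeroDivisors R)
    (J : Ideal R) (hJ : J = Ideal.span {x}) (I : Ideal R) (hJI : J ≤ I)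
    (r : ℕ) (hr : 1 ≤ r) (hred : I ^ (r + 1) = J * I ^ r) (hmin : I ^ r ≠ J * I ^ (r - 1))
    (u : ℕ) (hu : ∀ i : ℕ, Submodule.colon (J ^ i) ((I ^ r : Ideal R) : Set R) = I ^ (i - u)) :
    ∀ i : ℕ, Submodule.colon (J ^ i) ((I ^ r : Ideal R) : Set R) = I ^ i :=
  colon_pow_eq_pow_of_exists_shift_general x hx J hJ I hJI r hred hmin u hu
end

section
/- Let R be a commutative ring, let x ∈ R be a non-zerodivisor, let J = xR, and let I be an ideal with J I^r = I^{r+1} for some integer r ≥ 1. Then I^r ⊆ J if and only if I^{r-1} ⊆ J^r : I^r. -/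
/-! The reduction `J I^r = I^(r+1)` gives `I^(r-1) I^r = I^(2r-1) = J^(r-1) I^r`, so the colon
condition says `x^(r-1) I^r ⊆ x^r R`; since `x` is a non-zerodivisor, `x^(r-1)` cancels. -/

theorem pow_mul_pow_eq_pow_add_of_mul_pow_eq_pow_succ {M : Type*} [CommMonoid M] {a b : M}
    {r : ℕ} (h : a * b ^ r = b ^ (r + 1)) (k : ℕ) : a ^ k * b ^ r = b ^ (r + k) := by
  induction k with
  | zero => simp
  | succ k ih =>
    calc a ^ (k + 1) * b ^ r = a ^ k * (a * b ^ r) := by rw [pow_succ, mul_assoc]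
      _ = a ^ k * b ^ r * b := by rw [h, pow_succ, mul_assoc]
      _ = b ^ (r + (k + 1)) := by rw [ih, ← pow_succ, add_assoc]

namespace Ideal

variable {R : Type*} [CommSemiring R]

theorem le_colon_iff_mul_le_s15 {I J K : Ideal R} : K ≤ J.colon (I : Set R) ↔ K * I ≤ J :=
  ⟨fun h ↦ mul_le.2 fun _ ha _ hb ↦ Submodule.mem_colon.1 (h ha) _ hb,
    fun h _ ha ↦ Submodule.mem_colon.2 fun _ hb ↦ h (mul_mem_mul ha hb)⟩

theorem span_singleton_mul_right_mono_of_isLeftRegular {x : R} (hx : IsLeftRegular x)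
    {I J : Ideal R} : span {x} * I ≤ span {x} * J ↔ I ≤ J := by
  simp_rw [span_singleton_mul_le_span_singleton_mul, hx.eq_iff, exists_eq_right', SetLike.le_def]

end Ideal

/-- **Remark 4.6(2)**: Let `R` be a commutative ring, `x` a non-zerodivisor, `J = xR`, and `I`
an ideal with `J I^r = I^(r+1)` for some `r ≥ 1`.  Then `I^r ⊆ J` iff
`I^(r-1) ⊆ (J^r : I^r)`. -/
theorem pow_le_span_iff_pow_pred_le_colon
    {R : Type*} [CommRing R] (x : R) (hx : x ∈ nonZeroDivisors R)
    (J : Ideal R) (hJ : J = Ideal.span {x}) (I : Ideal R)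
    (r : ℕ) (hr : 1 ≤ r) (hred : J * I ^ r = I ^ (r + 1)) :
    I ^ r ≤ J ↔ I ^ (r - 1) ≤ Submodule.colon (J ^ r) ((I ^ r : Ideal R) : Set R) := by
  obtain ⟨s, rfl⟩ := Nat.exists_eq_add_of_le' hr
  subst hJ
  have hpow : I ^ s * I ^ (s + 1) = Ideal.span {x} ^ s * I ^ (s + 1) := by
    rw [pow_mul_pow_eq_pow_add_of_mul_pow_eq_pow_succ hred, ← pow_add, add_comm]
  rw [Nat.add_sub_cancel, Ideal.le_colon_iff_mul_le_s15, hpow, pow_succ (Ideal.span {x}) s,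
    Ideal.span_singleton_pow,
    Ideal.span_singleton_mul_right_mono_of_isLeftRegular
      ((isRegular_iff_mem_nonZeroDivisors.2 hx).left.pow s)]
end
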